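/- Exactness of the polynomial conformal elasticity complex at the cott stage: let k be a natural number. A matrix field σ ∈ P_{k+3}(S∩T) satisfies cott σ = 0 identically on ℝ³ if and only if there exists a vector field v ∈ P_{k+4}(ℝ³) with σ = dev(sym(grad v)). -/

import Mathlib

noncomputable section

open Matrix

/-- Vectors in ℝ³. -/
abbrev V3 := Fin 3 → ℝ
/-- 3×3 real matrices. -/
abbrev M3 := Matrix (Fin 3) (Fin 3) ℝ

/-- Partial derivative ∂ᵢ of a scalar field. -/
def pd (i : Fin 3) (f : V3 → ℝ) : V3 → ℝ :=
  fun x => fderiv ℝ f x (Pi.single i 1)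

/-- Gradient matrix of a vector field: (grad v)_{ij} = ∂ⱼ vᵢ. -/
def vgrad (v : V3 → V3) : V3 → M3 :=
  fun x => Matrix.of fun i j => pd j (fun y => v y i) x

/-- Divergence of a vector field. -/
def vdiv (v : V3 → V3) : V3 → ℝ :=
  fun x => ∑ i, pd i (fun y => v y i) x

/-- Cross product on ℝ³. -/
def cross (a b : V3) : V3 :=
  fun i => a (i + 1) * b (i + 2) - a (i + 2) * b (i + 1)

/-- Curl of a vector field. -/
def vcurl (v : V3 → V3) : V3 → V3 :=
  fun x i => pd (i + 1) (fun y => v y (i + 2)) x - pd (i + 2) (fun y => v y (i + 1)) x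

/-- Row-wise curl of a matrix field. -/
def mcurl (τ : V3 → M3) : V3 → M3 :=
  fun x => Matrix.of fun i j =>
    pd (j + 1) (fun y => τ y i (j + 2)) x - pd (j + 2) (fun y => τ y i (j + 1)) x

/-- Row-wise divergence of a matrix field. -/
def mdiv (τ : V3 → M3) : V3 → V3 :=
  fun x i => ∑ j, pd j (fun y => τ y i j) x

/-- Symmetric part of a matrix. -/
def msym (A : M3) : M3 := (1 / 2 : ℝ) • (A + Aᵀ)

/-- Deviatoric (trace-free) part of a matrix. -/
def devm (A : M3) : M3 := A - ((1 / 3 : ℝ) * A.trace) • (1 : M3)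

/-- The skew-symmetric matrix associated to a vector: mskw(ω) y = ω × y. -/
def mskw (w : V3) : M3 := !![0, -w 2, w 1; w 2, 0, -w 0; -w 1, w 0, 0]

/-- vskw(A) := mskw⁻¹(skw A). -/
def vskw (A : M3) : V3 :=
  (1 / 2 : ℝ) • ![A 2 1 - A 1 2, A 0 2 - A 2 0, A 1 0 - A 0 1]

/-- S⁻¹(A) := Aᵀ − (1/2)(tr A)I. -/
def Sinv (A : M3) : M3 := Aᵀ - ((1 / 2 : ℝ) * A.trace) • (1 : M3)

/-- S(A) := Aᵀ − (tr A)I. -/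
def Sop (A : M3) : M3 := Aᵀ - A.trace • (1 : M3)

/-- Incompatibility operator inc τ := curl (S⁻¹ (curl τ)). -/
def inc (τ : V3 → M3) : V3 → M3 := mcurl fun x => Sinv (mcurl τ x)

/-- Linearized Cotton–York operator cott τ := curl (S⁻¹ (inc τ)). -/
def cott (τ : V3 → M3) : V3 → M3 := mcurl fun x => Sinv (inc τ x)

/-- Hessian matrix of a scalar field. -/
def hess (u : V3 → ℝ) : V3 → M3 :=
  fun x => Matrix.of fun i j => pd i (pd j u) x

/-- Euclidean dot product on ℝ³. -/
def dotp (a b : V3) : ℝ := ∑ i, a i * b i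

/-- Smoothness of a vector field (componentwise C^∞). -/
def SmoothV (v : V3 → V3) : Prop := ∀ i, ContDiff ℝ (⊤ : ℕ∞) fun x => v x i

/-- Smoothness of a matrix field (entrywise C^∞). -/
def SmoothM (τ : V3 → M3) : Prop := ∀ i j, ContDiff ℝ (⊤ : ℕ∞) fun x => τ x i j

/-- Conformal Killing fields. -/
def CK (v : V3 → V3) : Prop :=
  ∃ (a c d : V3) (b : ℝ), ∀ x,
    v x = dotp x x • a - (2 * dotp a x) • x + b • x + cross c x + d

/-- Rigid motions. -/
def RM (v : V3 → V3) : Prop := ∃ a b : V3, ∀ x, v x = cross a x + b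

/-- Lowest-order Raviart–Thomas fields. -/
def RT (v : V3 → V3) : Prop := ∃ (a : V3) (b : ℝ), ∀ x, v x = a + b • x

/-- Polynomial scalar functions of total degree at most k. -/
def PolyLe (k : ℕ) (f : V3 → ℝ) : Prop :=
  ∃ p : MvPolynomial (Fin 3) ℝ, p.totalDegree ≤ k ∧ ∀ x, f x = MvPolynomial.eval x p

/-- Matrix fields with entries in P_k and values symmetric traceless. -/
def PolyLeST (k : ℕ) (τ : V3 → M3) : Prop :=
  (∀ i j, PolyLe k fun x => τ x i j) ∧ (∀ x, (τ x)ᵀ = τ x) ∧ ∀ x, (τ x).trace = 0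



section AuxPoly
open MvPolynomial

abbrev MP := MvPolynomial (Fin 3) ℝ


lemma coeff_pderiv (j : Fin 3) (p : MP) (d : Fin 3 →₀ ℕ) :
    coeff d (pderiv j p) = ((d j : ℝ) + 1) * coeff (d + Finsupp.single j 1) p := by
  induction p using MvPolynomial.induction_on' with
  | monomial s a =>
    rw [pderiv_monomial]
    rcases eq_or_ne s (d + Finsupp.single j 1) with rfl | hne
    · have h1 : (d + Finsupp.single j 1) - Finsupp.single j 1 = d := by
        simp
      rw [coeff_monomial, coeff_monomial, if_pos h1, if_pos rfl]
      have : ((d + Finsupp.single j 1 : Fin 3 →₀ ℕ) j) = d j + 1 := by simp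
      rw [this]
      push_cast
      ring
    · rw [coeff_monomial, coeff_monomial, if_neg hne]
      by_cases h2 : s - Finsupp.single j 1 = d
      · have hsj : s j = 0 := by
          by_contra hsj
          apply hne
          rw [← h2]
          ext i
          rcases eq_or_ne i j with rfl | hij
          · simp [Nat.sub_add_cancel (Nat.one_le_iff_ne_zero.mpr hsj)]
          · simp [Finsupp.single_apply, hij.symm, Ne.symm hij]
        rw [if_pos h2, hsj]
        simp
      · rw [if_neg h2, mul_zero]
  | add p q hp hq => simp [hp, hq]; ring

lemma pderiv_comm (i j : Fin 3) (p : MP) :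
    pderiv i (pderiv j p) = pderiv j (pderiv i p) := by
  ext d
  rcases eq_or_ne i j with rfl | hij
  · rfl
  · simp only [coeff_pderiv]
    have h1 : ((d + Finsupp.single i 1 : Fin 3 →₀ ℕ) j) = d j := by
      simp [Finsupp.single_apply, hij]
    have h2 : ((d + Finsupp.single j 1 : Fin 3 →₀ ℕ) i) = d i := by
      simp [Finsupp.single_apply, Ne.symm hij]
    rw [h1, h2, add_right_comm]
    ring

lemma degsum (d : Fin 3 →₀ ℕ) : (d.sum fun _ e => e) = ∑ i : Fin 3, d i :=
  Finsupp.sum_fintype _ _ (fun _ => rfl)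

lemma degree_eq_sum (d : Fin 3 →₀ ℕ) : d.degree = ∑ i : Fin 3, d i := by
  rw [Finsupp.degree]
  exact Finset.sum_subset (Finset.subset_univ _) (by
    intro i _ hi
    simpa using (Finsupp.notMem_support_iff.mp hi))

lemma tdeg_pderiv {p : MP} {n : ℕ} (i : Fin 3) (h : p.totalDegree ≤ n + 1) :
    (pderiv i p).totalDegree ≤ n := by
  rw [MvPolynomial.totalDegree]
  apply Finset.sup_le
  intro d hd
  have hc : coeff (d + Finsupp.single i 1) p ≠ 0 := by
    intro h0
    rw [MvPolynomial.mem_support_iff, coeff_pderiv, h0, mul_zero] at hd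
    exact hd rfl
  have hle := MvPolynomial.le_totalDegree (MvPolynomial.mem_support_iff.mpr hc)
  rw [degsum] at hle ⊢
  have hsum : (∑ j : Fin 3, (d + Finsupp.single i 1 : Fin 3 →₀ ℕ) j)
      = (∑ j : Fin 3, d j) + 1 := by
    simp [Finsupp.add_apply, Finset.sum_add_distrib, Finsupp.single_apply]
  omega

lemma euler_hc (n : ℕ) (p : MP) :
    ∑ i : Fin 3, X i * pderiv i (homogeneousComponent n p)
      = C (n : ℝ) * homogeneousComponent n p := by
  ext d
  rw [MvPolynomial.coeff_sum, MvPolynomial.coeff_C_mul]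
  have key : ∀ i : Fin 3, coeff d (X i * pderiv i (homogeneousComponent n p))
      = (d i : ℝ) * coeff d (homogeneousComponent n p) := by
    intro i
    classical
    rw [MvPolynomial.coeff_X_mul']
    by_cases hdi : i ∈ d.support
    · rw [if_pos hdi]
      rw [coeff_pderiv]
      have hdi' : d i ≠ 0 := Finsupp.mem_support_iff.mp hdi
      have h1 : (d - Finsupp.single i 1) + Finsupp.single i 1 = d := by
        apply tsub_add_cancel_of_le
        rw [Finsupp.single_le_iff]
        omega
      have h2 : ((d - Finsupp.single i 1 : Fin 3 →₀ ℕ) i) = d i - 1 := by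
        simp [Finsupp.tsub_apply]
      rw [h1, h2]
      congr 1
      have : (d i - 1) + 1 = d i := by omega
      rw [← this]
      push_cast
      ring
    · rw [if_neg hdi]
      have : d i = 0 := Finsupp.notMem_support_iff.mp hdi
      rw [this]
      simp
  rw [Finset.sum_congr rfl (fun i _ => key i), ← Finset.sum_mul]
  by_cases hc : coeff d (homogeneousComponent n p) = 0
  · rw [hc, mul_zero, mul_zero]
  · have hdeg : d.degree = n := by
      by_contra hne
      rw [MvPolynomial.coeff_homogeneousComponent, if_neg hne] at hc
      exact hc rfl
    have hs : (∑ i : Fin 3, d i) = n := by rw [← degree_eq_sum, hdeg]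
    rw [← Nat.cast_sum, hs]

lemma pderiv_hc (j : Fin 3) (n : ℕ) (p : MP) :
    pderiv j (homogeneousComponent (n + 1) p) = homogeneousComponent n (pderiv j p) := by
  ext d
  rw [coeff_pderiv, MvPolynomial.coeff_homogeneousComponent,
    MvPolynomial.coeff_homogeneousComponent, coeff_pderiv]
  have hdeg : (d + Finsupp.single j 1 : Fin 3 →₀ ℕ).degree = d.degree + 1 := by
    rw [degree_eq_sum, degree_eq_sum]
    simp [Finsupp.add_apply, Finset.sum_add_distrib, Finsupp.single_apply]
  rw [hdeg]
  by_cases h : d.degree = n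
  · rw [if_pos h, if_pos (by omega)]
  · rw [if_neg h, if_neg (by omega), mul_zero]

lemma hc_sum_ext {p : MP} {M : ℕ} (h : p.totalDegree < M) :
    ∑ n ∈ Finset.range M, homogeneousComponent n p = p := by
  conv_rhs => rw [← MvPolynomial.sum_homogeneousComponent p]
  exact (Finset.sum_subset (Finset.range_subset_range.mpr h) (fun n _ hn => by
    apply MvPolynomial.homogeneousComponent_eq_zero
    simp only [Finset.mem_range, not_lt] at hn
    omega)).symm

lemma poincare_scalar {u : Fin 3 → MP} {N : ℕ} (hdeg : ∀ i, (u i).totalDegree ≤ N)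
    (h : ∀ i j, pderiv i (u j) = pderiv j (u i)) :
    ∃ f : MP, f.totalDegree ≤ N + 1 ∧ ∀ j, pderiv j f = u j := by
  classical
  refine ⟨∑ n ∈ Finset.range (N + 1), C (((n : ℝ) + 1)⁻¹) *
      ∑ i : Fin 3, X i * homogeneousComponent n (u i), ?_, ?_⟩
  · apply (MvPolynomial.totalDegree_finset_sum _ _).trans
    apply Finset.sup_le
    intro n hn
    apply (MvPolynomial.totalDegree_mul _ _).trans
    rw [MvPolynomial.totalDegree_C, zero_add]
    apply (MvPolynomial.totalDegree_finset_sum _ _).trans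
    apply Finset.sup_le
    intro i _
    apply (MvPolynomial.totalDegree_mul _ _).trans
    have h1 : (X i : MP).totalDegree ≤ 1 := by
      simp [MvPolynomial.totalDegree_X]
    have h2 : (homogeneousComponent n (u i)).totalDegree ≤ n :=
      MvPolynomial.IsHomogeneous.totalDegree_le
        (MvPolynomial.homogeneousComponent_isHomogeneous n (u i))
    have : n ≤ N := by simpa using Finset.mem_range_succ_iff.mp hn
    omega
  · intro j
    rw [map_sum]
    have key : ∀ n : ℕ, pderiv j (C (((n : ℝ) + 1)⁻¹) *
        ∑ i : Fin 3, X i * homogeneousComponent n (u i)) = homogeneousComponent n (u j) := by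
      intro n
      rw [pderiv_C_mul, map_sum]
      have expand : ∀ i : Fin 3, pderiv j (X i * homogeneousComponent n (u i))
          = pderiv j (X i) * homogeneousComponent n (u i)
            + X i * pderiv j (homogeneousComponent n (u i)) := fun i => pderiv_mul
      rw [Finset.sum_congr rfl (fun i _ => expand i), Finset.sum_add_distrib]
      have first : ∑ i : Fin 3, pderiv j (X i) * homogeneousComponent n (u i)
          = homogeneousComponent n (u j) := by
        rw [Finset.sum_eq_single j]
        · simp
        · intro i _ hij
          rw [pderiv_X_of_ne hij]
          ring
        · simp
      have second : ∑ i : Fin 3, X i * pderiv j (homogeneousComponent n (u i))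
          = C (n : ℝ) * homogeneousComponent n (u j) := by
        cases n with
        | zero =>
          simp [MvPolynomial.homogeneousComponent_zero, pderiv_C]
        | succ m =>
          have hh : ∀ i : Fin 3, pderiv j (homogeneousComponent (m + 1) (u i))
              = pderiv i (homogeneousComponent (m + 1) (u j)) := by
            intro i
            rw [pderiv_hc, pderiv_hc, h j i]
          rw [Finset.sum_congr rfl (fun i _ => by rw [hh i])]
          exact euler_hc (m + 1) (u j)
      rw [first, second]
      have comb : (homogeneousComponent n (u j)) + C (n : ℝ) * homogeneousComponent n (u j)
          = C ((n : ℝ) + 1) * homogeneousComponent n (u j) := by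
        rw [map_add, MvPolynomial.C_1]
        ring
      rw [comb, ← mul_assoc, ← _root_.map_mul, inv_mul_cancel₀ (by positivity), MvPolynomial.C_1,
        one_mul]
    rw [Finset.sum_congr rfl (fun n _ => key n)]
    apply hc_sum_ext
    have := hdeg j
    omega


def idP : Fin 3 → Fin 3 → MP := fun i j => if i = j then 1 else 0
def trP (T : Fin 3 → Fin 3 → MP) : MP := T 0 0 + T 1 1 + T 2 2
def curlP (T : Fin 3 → Fin 3 → MP) : Fin 3 → Fin 3 → MP :=
  fun i j => pderiv (j + 1) (T i (j + 2)) - pderiv (j + 2) (T i (j + 1))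
def SinvP (T : Fin 3 → Fin 3 → MP) : Fin 3 → Fin 3 → MP :=
  fun i j => T j i - C (1/2 : ℝ) * trP T * idP i j
def incP (T : Fin 3 → Fin 3 → MP) : Fin 3 → Fin 3 → MP := curlP (SinvP (curlP T))
def cottP (T : Fin 3 → Fin 3 → MP) : Fin 3 → Fin 3 → MP := curlP (SinvP (incP T))
def gradP (v : Fin 3 → MP) : Fin 3 → Fin 3 → MP := fun i j => pderiv j (v i)
def symP (T : Fin 3 → Fin 3 → MP) : Fin 3 → Fin 3 → MP :=
  fun i j => C (1/2 : ℝ) * (T i j + T j i)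
def devP (T : Fin 3 → Fin 3 → MP) : Fin 3 → Fin 3 → MP :=
  fun i j => T i j - C (1/3 : ℝ) * trP T * idP i j

lemma pdc10 (p : MP) : pderiv (1:Fin 3) (pderiv (0:Fin 3) p) = pderiv 0 (pderiv 1 p) :=
  pderiv_comm _ _ _
lemma pdc20 (p : MP) : pderiv (2:Fin 3) (pderiv (0:Fin 3) p) = pderiv 0 (pderiv 2 p) :=
  pderiv_comm _ _ _
lemma pdc21 (p : MP) : pderiv (2:Fin 3) (pderiv (1:Fin 3) p) = pderiv 1 (pderiv 2 p) :=
  pderiv_comm _ _ _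

lemma fmk0 (h : 0 < 3) : (⟨0, h⟩ : Fin 3) = 0 := rfl
lemma fmk1 (h : 1 < 3) : (⟨1, h⟩ : Fin 3) = 1 := rfl
lemma fmk2 (h : 2 < 3) : (⟨2, h⟩ : Fin 3) = 2 := rfl

set_option maxHeartbeats 1000000 in
lemma inc_symgrad (v : Fin 3 → MP) (i j : Fin 3) : incP (symP (gradP v)) i j = 0 := by
  fin_cases i <;> fin_cases j <;>
    simp only [incP, curlP, SinvP, symP, gradP, trP, idP, fmk0, fmk1, fmk2, Fin.isValue, map_add, map_sub,
      pderiv_C_mul, Fin.reduceAdd, Fin.reduceEq, if_true, if_false, mul_one, mul_zero,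
      sub_zero, pdc10, pdc20, pdc21] <;>
    ring


set_option maxHeartbeats 4000000 in
lemma cott_dsg (v : Fin 3 → MP) (i j : Fin 3) : cottP (devP (symP (gradP v))) i j = 0 := by
  fin_cases i <;> fin_cases j <;>
    (simp only [cottP, incP, curlP, SinvP, devP, symP, gradP, trP, idP, fmk0, fmk1, fmk2,
      Fin.isValue, map_add, map_sub, map_zero, pderiv_C_mul, Fin.reduceAdd, Fin.reduceEq,
      if_true, if_false, mul_one, mul_zero, sub_zero, pdc10, pdc20, pdc21]
     try simp only [← MvPolynomial.smul_eq_C_mul]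
     try module
     try ring)

def SopP (T : Fin 3 → Fin 3 → MP) : Fin 3 → Fin 3 → MP :=
  fun i j => T j i - trP T * idP i j
def divP (v : Fin 3 → MP) : MP := pderiv 0 (v 0) + pderiv 1 (v 1) + pderiv 2 (v 2)
def lapP (u : MP) : MP := pderiv 0 (pderiv 0 u) + pderiv 1 (pderiv 1 u) + pderiv 2 (pderiv 2 u)
def mskwP (w : Fin 3 → MP) : Fin 3 → Fin 3 → MP := fun i j =>
  ![![0, -w 2, w 1], ![w 2, 0, -w 0], ![-w 1, w 0, 0]] i j

-- matrix algebra (no derivatives)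
lemma idP_symm (i j : Fin 3) : idP i j = idP j i := by
  by_cases h : i = j <;> simp [idP, h, Ne.symm, eq_comm]

lemma sop_sinv (B : Fin 3 → Fin 3 → MP) (i j : Fin 3) : SopP (SinvP B) i j = B i j := by
  fin_cases i <;> fin_cases j <;>
    (simp only [SopP, SinvP, trP, idP, fmk0, fmk1, fmk2, Fin.isValue, Fin.reduceEq,
      if_true, if_false, mul_one, mul_zero, sub_zero]
     try simp only [← MvPolynomial.smul_eq_C_mul]
     try module
     try ring)

lemma sop_diff (A : Fin 3 → Fin 3 → MP) (i j : Fin 3) :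
    SopP A i j - SopP A j i = A j i - A i j := by
  simp only [SopP, idP_symm i j]
  ring

lemma mskw_antisym (w : Fin 3 → MP) (i j : Fin 3) : mskwP w i j + mskwP w j i = 0 := by
  fin_cases i <;> fin_cases j <;> (simp [mskwP]; try ring)

-- derivative identities
lemma inc_sym_symm (T : Fin 3 → Fin 3 → MP) (i j : Fin 3) :
    incP (symP T) i j = incP (symP T) j i := by
  fin_cases i <;> fin_cases j <;>
    (simp only [incP, curlP, SinvP, symP, trP, idP, fmk0, fmk1, fmk2,
      Fin.isValue, map_add, map_sub, map_zero, pderiv_C_mul, Fin.reduceAdd, Fin.reduceEq,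
      if_true, if_false, mul_one, mul_zero, sub_zero, pdc10, pdc20, pdc21]
     try simp only [← MvPolynomial.smul_eq_C_mul]
     try module
     try ring)

lemma tr_curl_sym (T : Fin 3 → Fin 3 → MP) : trP (curlP (symP T)) = 0 := by
  simp only [trP, curlP, symP, fmk0, fmk1, fmk2, Fin.isValue, map_add, map_sub,
    pderiv_C_mul, Fin.reduceAdd, pdc10, pdc20, pdc21]
  simp only [← MvPolynomial.smul_eq_C_mul]
  module

lemma inc_add (A B : Fin 3 → Fin 3 → MP) (i j : Fin 3) :
    incP (fun a b => A a b + B a b) i j = incP A i j + incP B i j := by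
  fin_cases i <;> fin_cases j <;>
    (simp only [incP, curlP, SinvP, trP, idP, fmk0, fmk1, fmk2,
      Fin.isValue, map_add, map_sub, map_zero, pderiv_C_mul, Fin.reduceAdd, Fin.reduceEq,
      if_true, if_false, mul_one, mul_zero, sub_zero, pdc10, pdc20, pdc21]
     try simp only [← MvPolynomial.smul_eq_C_mul]
     try module
     try ring)

lemma inc_id (u : MP) (i j : Fin 3) :
    incP (fun a b => u * idP a b) i j = lapP u * idP i j - pderiv i (pderiv j u) := by
  fin_cases i <;> fin_cases j <;>
    (simp only [incP, curlP, SinvP, trP, idP, lapP, fmk0, fmk1, fmk2,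
      Fin.isValue, map_add, map_sub, map_zero, pderiv_C_mul, Fin.reduceAdd, Fin.reduceEq,
      if_true, if_false, mul_one, mul_zero, sub_zero, pdc10, pdc20, pdc21]
     try simp only [← MvPolynomial.smul_eq_C_mul]
     try module
     try ring)

lemma mskw_curl (w : Fin 3 → MP) (i j : Fin 3) :
    curlP (mskwP w) i j = divP w * idP i j - pderiv i (w j) := by
  fin_cases i <;> fin_cases j <;>
    (simp only [curlP, mskwP, divP, idP, fmk0, fmk1, fmk2,
      Fin.isValue, map_add, map_sub, map_zero, map_neg, Fin.reduceAdd, Fin.reduceEq,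
      if_true, if_false, mul_one, mul_zero, sub_zero, Matrix.cons_val_zero,
      Matrix.cons_val_one, Matrix.head_cons, Matrix.cons_val_two, Matrix.tail_cons]
     try simp only [← MvPolynomial.smul_eq_C_mul]
     try module
     try ring)

lemma curl_add (A B : Fin 3 → Fin 3 → MP) (i j : Fin 3) :
    curlP (fun a b => A a b + B a b) i j = curlP A i j + curlP B i j := by
  simp only [curlP, map_add]
  ring


lemma deg_add {p q : MP} {n : ℕ} (hp : p.totalDegree ≤ n) (hq : q.totalDegree ≤ n) :
    (p + q).totalDegree ≤ n :=
  (MvPolynomial.totalDegree_add p q).trans (max_le hp hq)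

lemma deg_neg {p : MP} {n : ℕ} (hp : p.totalDegree ≤ n) : (-p).totalDegree ≤ n := by
  have : (-p) = C (-1 : ℝ) * p := by ring_nf; rw [MvPolynomial.C_neg, MvPolynomial.C_1]; ring
  rw [this]
  exact le_trans (MvPolynomial.totalDegree_mul _ _)
    (by rw [MvPolynomial.totalDegree_C]; omega)

lemma deg_sub {p q : MP} {n : ℕ} (hp : p.totalDegree ≤ n) (hq : q.totalDegree ≤ n) :
    (p - q).totalDegree ≤ n := by
  rw [sub_eq_add_neg]; exact deg_add hp (deg_neg hq)

lemma deg_Cmul {p : MP} {n : ℕ} (a : ℝ) (hp : p.totalDegree ≤ n) :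
    (C a * p).totalDegree ≤ n :=
  le_trans (MvPolynomial.totalDegree_mul _ _) (by rw [MvPolynomial.totalDegree_C]; omega)

lemma deg_mul_idP {p : MP} {n : ℕ} (i j : Fin 3) (hp : p.totalDegree ≤ n) :
    (p * idP i j).totalDegree ≤ n := by
  by_cases h : i = j
  · simp [idP, h, hp]
  · simp [idP, h, MvPolynomial.totalDegree_zero]

lemma deg_curl {T : Fin 3 → Fin 3 → MP} {n : ℕ} (h : ∀ i j, (T i j).totalDegree ≤ n + 1) :
    ∀ i j, (curlP T i j).totalDegree ≤ n := fun i j =>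
  deg_sub (tdeg_pderiv _ (h _ _)) (tdeg_pderiv _ (h _ _))

lemma deg_trP {T : Fin 3 → Fin 3 → MP} {n : ℕ} (h : ∀ i j, (T i j).totalDegree ≤ n) :
    (trP T).totalDegree ≤ n := deg_add (deg_add (h _ _) (h _ _)) (h _ _)

lemma deg_Sinv {T : Fin 3 → Fin 3 → MP} {n : ℕ} (h : ∀ i j, (T i j).totalDegree ≤ n) :
    ∀ i j, (SinvP T i j).totalDegree ≤ n := fun i j =>
  deg_sub (h _ _) (by
    rw [mul_assoc]
    exact deg_Cmul _ (deg_mul_idP _ _ (deg_trP h)))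

lemma deg_mskw {w : Fin 3 → MP} {n : ℕ} (h : ∀ i, (w i).totalDegree ≤ n) :
    ∀ i j, (mskwP w i j).totalDegree ≤ n := by
  intro i j
  fin_cases i <;> fin_cases j <;>
    simp [mskwP, MvPolynomial.totalDegree_zero, deg_neg, h]

lemma curl_symm_of_zero {T : Fin 3 → Fin 3 → MP}
    (hcurl : ∀ i j, curlP T i j = 0) :
    ∀ i a b, pderiv a (T i b) = pderiv b (T i a) := by
  intro i a b
  have h0 := sub_eq_zero.mp (hcurl i 0)
  have h1 := sub_eq_zero.mp (hcurl i 1)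
  have h2 := sub_eq_zero.mp (hcurl i 2)
  simp only [curlP, Fin.reduceAdd] at h0 h1 h2
  norm_num at h0 h1 h2
  fin_cases a <;> fin_cases b <;>
    simp only [fmk0, fmk1, fmk2] <;>
    first
      | rfl
      | exact h0 | exact h0.symm | exact h1 | exact h1.symm | exact h2 | exact h2.symm

lemma poincare_row {T : Fin 3 → Fin 3 → MP} {N : ℕ}
    (hdeg : ∀ i j, (T i j).totalDegree ≤ N)
    (hcurl : ∀ i j, curlP T i j = 0) :
    ∃ w : Fin 3 → MP, (∀ i, (w i).totalDegree ≤ N + 1) ∧ ∀ i j, pderiv j (w i) = T i j := by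
  have key : ∀ i : Fin 3, ∃ f : MP, f.totalDegree ≤ N + 1 ∧ ∀ j, pderiv j f = T i j := by
    intro i
    exact poincare_scalar (fun j => hdeg i j) (fun a b => curl_symm_of_zero hcurl i a b)
  choose w hw1 hw2 using key
  exact ⟨w, hw1, fun i j => hw2 i j⟩

theorem poly_forward {K : ℕ} {P : Fin 3 → Fin 3 → MP}
    (hsym : ∀ a b, P a b = P b a) (htr : trP P = 0)
    (hdeg : ∀ a b, (P a b).totalDegree ≤ K + 3)
    (hcott : ∀ i j, cottP P i j = 0) :
    ∃ V : Fin 3 → MP, (∀ i, (V i).totalDegree ≤ K + 4) ∧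
      ∀ i j, P i j = devP (symP (gradP V)) i j := by
  -- degrees of S⁻¹ inc P
  have hdeg1 : ∀ i j, (curlP P i j).totalDegree ≤ K + 2 := deg_curl hdeg
  have hdeg2 : ∀ i j, (SinvP (curlP P) i j).totalDegree ≤ K + 2 := deg_Sinv hdeg1
  have hdeg3 : ∀ i j, (incP P i j).totalDegree ≤ K + 1 := deg_curl hdeg2
  have hdeg4 : ∀ i j, (SinvP (incP P) i j).totalDegree ≤ K + 1 := deg_Sinv hdeg3
  -- Step 1 : S⁻¹ inc P = grad w
  obtain ⟨w, hwdeg, hw⟩ := poincare_row hdeg4 hcott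
  -- Step 2 : inc P = Sop (grad w)
  have hinc : ∀ i j, incP P i j = SopP (gradP w) i j := by
    intro i j
    have h1 : SopP (gradP w) i j = SopP (SinvP (incP P)) i j := by
      simp only [SopP, trP, gradP, hw]
    rw [h1, sop_sinv]
  -- Step 3 : inc P is symmetric
  have hPfun : P = symP P := by
    funext a b
    simp only [symP, hsym a b]
    rw [show P b a + P b a = C (2:ℝ) * P b a by rw [map_ofNat]; ring, ← mul_assoc,
      ← _root_.map_mul]
    norm_num
  have hincsym : ∀ i j, incP P i j = incP P j i := by
    intro i j
    rw [hPfun]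
    exact inc_sym_symm P i j
  -- Step 4 : w is curl-free
  have hwsym : ∀ i j, pderiv i (w j) = pderiv j (w i) := by
    intro i j
    have h1 : SopP (gradP w) i j - SopP (gradP w) j i = 0 := by
      rw [← hinc i j, ← hinc j i, hincsym i j, sub_self]
    have h2 := sop_diff (gradP w) i j
    rw [h1] at h2
    have : gradP w j i = gradP w i j := by
      have := sub_eq_zero.mp h2.symm
      exact this
    simpa [gradP] using this
  obtain ⟨u, hudeg, hu⟩ := poincare_scalar hwdeg hwsym
  -- Step 6 : inc (P + u I) = 0
  set ρ : Fin 3 → Fin 3 → MP := fun a b => P a b + u * idP a b with hρ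
  have hrhoinc : ∀ i j, incP ρ i j = 0 := by
    intro i j
    rw [hρ, inc_add, inc_id]
    have h5 : incP P i j = pderiv i (pderiv j u) - lapP u * idP i j := by
      rw [hinc i j]
      simp only [SopP, gradP, trP, hu, lapP, divP]
    rw [h5]
    ring
  have hrhosym : ∀ a b, ρ a b = ρ b a := by
    intro a b
    simp only [hρ, hsym a b, idP_symm a b]
  have hrhodeg : ∀ a b, (ρ a b).totalDegree ≤ K + 3 :=
    fun a b => deg_add (hdeg a b) (deg_mul_idP _ _ hudeg)
  -- Step 7 : Saint-Venant
  have hdc1 : ∀ i j, (curlP ρ i j).totalDegree ≤ K + 2 := deg_curl hrhodeg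
  have hdc2 : ∀ i j, (SinvP (curlP ρ) i j).totalDegree ≤ K + 2 := deg_Sinv hdc1
  obtain ⟨w₂, hw2deg, hw2⟩ := poincare_row hdc2 hrhoinc
  have hrhofun : ρ = symP ρ := by
    funext a b
    simp only [symP, hrhosym a b]
    rw [show ρ b a + ρ b a = C (2:ℝ) * ρ b a by rw [map_ofNat]; ring, ← mul_assoc,
      ← _root_.map_mul]
    norm_num
  have htrcurl : trP (curlP ρ) = 0 := by
    rw [hrhofun]; exact tr_curl_sym ρ
  have hcurlrho : ∀ i j, curlP ρ i j = pderiv i (w₂ j) := by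
    intro i j
    have := hw2 j i
    rw [this]
    simp only [SinvP, htrcurl]
    ring
  have hdivw2 : divP w₂ = 0 := by
    simp only [divP, hcurlrho]
    have h00 := hcurlrho 0 0
    have h11 := hcurlrho 1 1
    have h22 := hcurlrho 2 2
    have : pderiv (0:Fin 3) (w₂ 0) + pderiv (1:Fin 3) (w₂ 1) + pderiv (2:Fin 3) (w₂ 2)
        = trP (curlP ρ) := by
      rw [trP, h00, h11, h22]
    rw [← htrcurl, ← this]
  have hcurlzero : ∀ i j, curlP (fun a b => ρ a b + mskwP w₂ a b) i j = 0 := by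
    intro i j
    rw [curl_add, mskw_curl, hcurlrho, hdivw2]
    ring
  have hdegsum : ∀ a b, ((fun a b => ρ a b + mskwP w₂ a b) a b).totalDegree ≤ K + 3 :=
    fun a b => deg_add (hrhodeg a b) (deg_mskw hw2deg a b)
  obtain ⟨V, hVdeg, hV⟩ := poincare_row hdegsum hcurlzero
  refine ⟨V, hVdeg, ?_⟩
  -- Step 8 : sym grad V = ρ
  have hsymgrad : ∀ i j, symP (gradP V) i j = ρ i j := by
    intro i j
    simp only [symP, gradP, hV]
    have hms := mskw_antisym w₂ i j
    have hrs := hrhosym j i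
    rw [hrs]
    rw [show ρ i j + mskwP w₂ i j + (ρ i j + mskwP w₂ j i)
        = C (2:ℝ) * ρ i j + (mskwP w₂ i j + mskwP w₂ j i) by rw [map_ofNat]; ring, hms,
      add_zero, ← mul_assoc, ← _root_.map_mul]
    norm_num
  -- Step 9 : conclude
  intro i j
  have htrsg : trP (symP (gradP V)) = trP ρ := by
    simp only [trP, hsymgrad]
  simp only [devP, htrsg, hsymgrad]
  simp only [hρ, trP, idP]
  simp only [eq_self_iff_true, if_true]
  have htr' : P 0 0 + P 1 1 + P 2 2 = 0 := htr
  by_cases h : i = j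
  · subst h
    simp only [if_true]
    rw [show P 0 0 + u * 1 + (P 1 1 + u * 1) + (P 2 2 + u * 1)
        = (P 0 0 + P 1 1 + P 2 2) + C (3:ℝ) * u by rw [map_ofNat]; ring, htr', zero_add,
      mul_one, ← mul_assoc, ← _root_.map_mul]
    norm_num
  · rw [if_neg h]
    ring


lemma hasFDerivAt_eval (p : MP) (x : V3) :
    HasFDerivAt (fun y : V3 => MvPolynomial.eval y p)
      (∑ i : Fin 3, MvPolynomial.eval x (pderiv i p) • (ContinuousLinearMap.proj i :
        V3 →L[ℝ] ℝ)) x := by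
  induction p using MvPolynomial.induction_on with
  | C a =>
    simp only [eval_C, pderiv_C, map_zero, zero_smul, Finset.sum_const_zero]
    exact hasFDerivAt_const a x
  | add p q hp hq =>
    have := hp.add hq
    simp only [map_add] at this ⊢
    refine this.congr_fderiv ?_
    simp [add_smul, Finset.sum_add_distrib]
  | mul_X p i hp =>
    have hX : HasFDerivAt (fun y : V3 => y i)
        (ContinuousLinearMap.proj i : V3 →L[ℝ] ℝ) x :=
      (ContinuousLinearMap.proj i : V3 →L[ℝ] ℝ).hasFDerivAt
    have := hp.mul hX
    simp only [_root_.map_mul, eval_X] at this ⊢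
    refine this.congr_fderiv ?_
    ext y
    simp only [ContinuousLinearMap.sum_apply, ContinuousLinearMap.smul_apply,
      ContinuousLinearMap.add_apply, ContinuousLinearMap.proj_apply, smul_eq_mul,
      pderiv_mul, map_add, _root_.map_mul, eval_X, pderiv_X]
    fin_cases i <;>
      simp [Fin.sum_univ_three, Pi.single_apply] <;> ring

lemma pd_eval (i : Fin 3) (p : MP) (f : V3 → ℝ) (hf : ∀ y, f y = MvPolynomial.eval y p) :
    ∀ x, pd i f x = MvPolynomial.eval x (pderiv i p) := by
  intro x
  have hfe : f = fun y => MvPolynomial.eval y p := funext hf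
  rw [pd, hfe, (hasFDerivAt_eval p x).fderiv]
  simp only [ContinuousLinearMap.sum_apply, ContinuousLinearMap.smul_apply,
    ContinuousLinearMap.proj_apply, smul_eq_mul, Pi.single_apply]
  rw [Fin.sum_univ_three]
  fin_cases i <;> simp

open MvPolynomial in
lemma mcurl_eval {τ : V3 → M3} {T : Fin 3 → Fin 3 → MP}
    (h : ∀ x i j, τ x i j = eval x (T i j)) :
    ∀ x i j, mcurl τ x i j = eval x (curlP T i j) := by
  intro x i j
  show pd (j + 1) (fun y => τ y i (j + 2)) x - pd (j + 2) (fun y => τ y i (j + 1)) x = _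
  rw [pd_eval (j + 1) (T i (j + 2)) _ (fun y => h y i (j + 2)) x,
    pd_eval (j + 2) (T i (j + 1)) _ (fun y => h y i (j + 1)) x, curlP, map_sub]

open MvPolynomial in
lemma Sinv_eval {T : Fin 3 → Fin 3 → MP} (x : V3) {A : M3}
    (h : ∀ i j, A i j = eval x (T i j)) :
    ∀ i j, Sinv A i j = eval x (SinvP T i j) := by
  intro i j
  rw [Sinv, Matrix.sub_apply, Matrix.transpose_apply, Matrix.smul_apply, Matrix.one_apply,
    Matrix.trace_fin_three, SinvP, map_sub, _root_.map_mul, _root_.map_mul, eval_C,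
    h j i, h 0 0, h 1 1, h 2 2]
  simp only [trP, idP, map_add, apply_ite (eval x), _root_.map_one, map_zero, smul_eq_mul]
  all_goals by_cases hij : i = j <;> simp [hij] <;> try ring

open MvPolynomial in
lemma inc_eval {τ : V3 → M3} {T : Fin 3 → Fin 3 → MP}
    (h : ∀ x i j, τ x i j = eval x (T i j)) :
    ∀ x i j, inc τ x i j = eval x (incP T i j) := by
  have h1 := mcurl_eval h
  have h2 : ∀ x i j, Sinv (mcurl τ x) i j = eval x (SinvP (curlP T) i j) :=
    fun x => Sinv_eval x (h1 x)
  exact mcurl_eval h2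

open MvPolynomial in
lemma cott_eval {τ : V3 → M3} {T : Fin 3 → Fin 3 → MP}
    (h : ∀ x i j, τ x i j = eval x (T i j)) :
    ∀ x i j, cott τ x i j = eval x (cottP T i j) := by
  have h3 := inc_eval h
  have h4 : ∀ x i j, Sinv (inc τ x) i j = eval x (SinvP (incP T) i j) :=
    fun x => Sinv_eval x (h3 x)
  exact mcurl_eval h4

open MvPolynomial in
lemma vgrad_eval {v : V3 → V3} {Vp : Fin 3 → MP} (hv : ∀ x i, v x i = eval x (Vp i)) :
    ∀ x i j, vgrad v x i j = eval x (gradP Vp i j) := by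
  intro x i j
  show pd j (fun y => v y i) x = _
  rw [pd_eval j (Vp i) _ (fun y => hv y i) x]
  rfl

open MvPolynomial in
lemma dsg_eval {T : Fin 3 → Fin 3 → MP} (x : V3) {A : M3}
    (h : ∀ i j, A i j = eval x (T i j)) :
    ∀ i j, devm (msym A) i j = eval x (devP (symP T) i j) := by
  intro i j
  have hmsym : ∀ a b, msym A a b = eval x (symP T a b) := by
    intro a b
    rw [msym, Matrix.smul_apply, Matrix.add_apply, Matrix.transpose_apply, h a b, h b a,
      symP, _root_.map_mul, _root_.map_add, eval_C, smul_eq_mul]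
  rw [devm, Matrix.sub_apply, Matrix.smul_apply, Matrix.one_apply,
    Matrix.trace_fin_three, hmsym i j, hmsym 0 0, hmsym 1 1, hmsym 2 2,
    devP, map_sub, _root_.map_mul, _root_.map_mul, eval_C]
  simp only [trP, idP, _root_.map_add, apply_ite (eval x), _root_.map_one, map_zero,
    smul_eq_mul]
  all_goals by_cases hij : i = j <;> simp [hij] <;> try ring

end AuxPoly

/-- exactness of the polynomial conformal elasticity complex at the cott stage. -/
theorem poly_conformal_elasticity_exact_cott (k : ℕ) (σ : V3 → M3)
    (hσ : PolyLeST (k + 3) σ) :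
    (∀ x, cott σ x = 0) ↔
      ∃ v : V3 → V3, (∀ i, PolyLe (k + 4) fun x => v x i) ∧
        ∀ x, σ x = devm (msym (vgrad v x)) := by
  obtain ⟨hPoly, hsymm, htrace⟩ := hσ
  choose Pm hPdeg hPeval using hPoly
  have hσe : ∀ x (i j : Fin 3), σ x i j = MvPolynomial.eval x (Pm i j) :=
    fun x i j => hPeval i j x
  constructor
  · intro hcott
    have hsymP : ∀ a b, Pm a b = Pm b a := by
      intro a b
      apply MvPolynomial.funext; intro x
      rw [← hσe x a b, ← hσe x b a, show σ x b a = (σ x)ᵀ b a from by rw [hsymm x],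
        Matrix.transpose_apply]
    have htrP0 : trP Pm = 0 := by
      apply MvPolynomial.funext; intro x
      have htr := htrace x
      rw [Matrix.trace_fin_three] at htr
      simp only [trP, map_add, map_zero, ← hσe x]
      exact htr
    have hcottP : ∀ i j, cottP Pm i j = 0 := by
      intro i j
      apply MvPolynomial.funext; intro x
      rw [← cott_eval hσe x i j, hcott x]
      simp
    obtain ⟨V, hVdeg, hVP⟩ := poly_forward hsymP htrP0 (fun a b => hPdeg a b) hcottP
    refine ⟨fun x i => MvPolynomial.eval x (V i), fun i => ⟨V i, hVdeg i, fun _ => rfl⟩, ?_⟩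
    intro x
    have hv : ∀ (y : V3) (i : Fin 3),
        (fun (x : V3) (i : Fin 3) => MvPolynomial.eval x (V i)) y i
          = MvPolynomial.eval y (V i) := fun _ _ => rfl
    have hg := vgrad_eval hv
    ext i j
    rw [hσe x i j, hVP i j, ← dsg_eval x (hg x) i j]
  · rintro ⟨v, hvP, hveq⟩ x
    choose Vp hVdeg hVeval using hvP
    have hv : ∀ (y : V3) (i : Fin 3), v y i = MvPolynomial.eval y (Vp i) :=
      fun y i => hVeval i y
    have hg := vgrad_eval hv
    have hσe2 : ∀ y (i j : Fin 3), σ y i j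
        = MvPolynomial.eval y (devP (symP (gradP Vp)) i j) := by
      intro y i j
      rw [hveq y]
      exact dsg_eval y (hg y) i j
    ext i j
    rw [cott_eval hσe2 x i j, cott_dsg Vp i j]
    simp


end
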